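/- arXiv:2212.10270 — 3 statements merged into one kernel-verified Lean document; each statement's English description precedes it below -/
import Mathlib

section
/- Let k > 0 and let X : ℝ → ℝ be a smooth function satisfying X''''(ρ) − 2k²X''(ρ) + k⁴X(ρ) = 0 for all ρ ≥ 0, such that X(ρ) → 0 as ρ → +∞, and satisfying the boundary conditions X(0) = 0 and X''(0) − k²X(0) = 0. Then X(ρ) = 0 for all ρ ≥ 0. (This is the Lopatinskij–Shapiro condition for the lapse component of the approximate Killing vector equation with the boundary operators I and Δ.) -/
open Filter Real Set

private lemma lapse_constOnIci {F : ℝ → ℝ} (h : ∀ x : ℝ, 0 ≤ x → HasDerivAt F 0 x)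
    {ρ : ℝ} (hρ : 0 ≤ ρ) : F ρ = F 0 :=
  constant_of_has_deriv_right_zero (f := F) (a := 0) (b := ρ)
    (fun x hx => (h x hx.1).continuousAt.continuousWithinAt)
    (fun x hx => (h x hx.1).hasDerivWithinAt) ρ ⟨hρ, le_refl ρ⟩

private lemma lapse_hexp (a x : ℝ) :
    HasDerivAt (fun ρ => Real.exp (a*ρ)) (a * Real.exp (a*x)) x := by
  have := (Real.hasDerivAt_exp (a*x)).comp x ((hasDerivAt_id x).const_mul a)
  simpa [mul_comm, Function.comp_def] using this

/-- The Lopatinskij–Shapiro condition for the lapse component of the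
approximate Killing vector equation: a smooth solution on `[0, ∞)` of
`X'''' − 2k²X'' + k⁴X = 0` (with `k > 0`) which tends to `0` as `ρ → +∞` and satisfies
the boundary conditions `X(0) = 0` and `X''(0) − k²X(0) = 0` vanishes identically on `[0, ∞)`. -/
theorem lapse_LS_condition (k : ℝ) (hk : 0 < k)
    (X : ℝ → ℝ) (hX : ContDiff ℝ (⊤ : ℕ∞) X)
    (hODE : ∀ ρ : ℝ, 0 ≤ ρ →
      iteratedDeriv 4 X ρ - 2 * k ^ 2 * iteratedDeriv 2 X ρ + k ^ 4 * X ρ = 0)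
    (hdecay : Filter.Tendsto X Filter.atTop (nhds 0))
    (hb1 : X 0 = 0)
    (hb2 : iteratedDeriv 2 X 0 - k ^ 2 * X 0 = 0) :
    ∀ ρ : ℝ, 0 ≤ ρ → X ρ = 0 := by
  have hk' : k ≠ 0 := ne_of_gt hk
  have hdiffn : ∀ n : ℕ, Differentiable ℝ (iteratedDeriv n X) := fun n =>
    hX.differentiable_iteratedDeriv n (by exact_mod_cast lt_top_iff_ne_top.2 (by simp))
  have hd : ∀ (n : ℕ) (x : ℝ), HasDerivAt (iteratedDeriv n X) (iteratedDeriv (n+1) X x) x := by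
    intro n x
    rw [iteratedDeriv_succ]
    exact (hdiffn n x).hasDerivAt
  have hdX : ∀ x : ℝ, HasDerivAt X (deriv X x) x := by
    intro x; have := hd 0 x; rwa [iteratedDeriv_zero, iteratedDeriv_one] at this
  have hd1 : ∀ x : ℝ, HasDerivAt (deriv X) (iteratedDeriv 2 X x) x := by
    intro x; have := hd 1 x; rwa [iteratedDeriv_one] at this
  have hODE' : ∀ x : ℝ, 0 ≤ x →
      iteratedDeriv 4 X x = 2*k^2 * iteratedDeriv 2 X x - k^4 * X x := by
    intro x hx; linarith [hODE x hx]
  have em : ∀ x : ℝ, Real.exp (-k*x) = (Real.exp (k*x))⁻¹ := by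
    intro x; rw [show -k*x = -(k*x) by ring, Real.exp_neg]
  have e2 : ∀ x : ℝ, Real.exp (2*k*x) = Real.exp (k*x) ^ 2 := by
    intro x; rw [show 2*k*x = k*x + k*x by ring, Real.exp_add, sq]
  have eM : ∀ x : ℝ, Real.exp (-(2*k)*x) = (Real.exp (k*x) ^ 2)⁻¹ := by
    intro x; rw [show -(2*k)*x = -(k*x + k*x) by ring, Real.exp_neg, Real.exp_add, sq]
  obtain ⟨c, hcdef⟩ : ∃ c : ℝ, c = iteratedDeriv 3 X 0 - k^2 * deriv X 0 := ⟨_, rfl⟩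
  obtain ⟨b, hbdef⟩ : ∃ b : ℝ, b = deriv X 0 := ⟨_, rfl⟩
  -- Step 1
  have step1 : ∀ ρ : ℝ, 0 ≤ ρ →
      (iteratedDeriv 3 X ρ - k^2 * deriv X ρ
        - k * (iteratedDeriv 2 X ρ - k^2 * X ρ)) * Real.exp (k*ρ) = c := by
    have key : ∀ x : ℝ, 0 ≤ x → HasDerivAt (fun ρ =>
        (iteratedDeriv 3 X ρ - k^2 * deriv X ρ
          - k * (iteratedDeriv 2 X ρ - k^2 * X ρ)) * Real.exp (k*ρ)) 0 x := by
      intro x hx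
      have hu : HasDerivAt (fun ρ => iteratedDeriv 3 X ρ - k^2 * deriv X ρ
          - k * (iteratedDeriv 2 X ρ - k^2 * X ρ))
          (iteratedDeriv 4 X x - k^2 * iteratedDeriv 2 X x
            - k * (iteratedDeriv 3 X x - k^2 * deriv X x)) x :=
        ((hd 3 x).sub ((hd1 x).const_mul (k^2))).sub
          (((hd 2 x).sub ((hdX x).const_mul (k^2))).const_mul k)
      have h := hu.mul (lapse_hexp k x)
      refine h.congr_deriv ?_
      symm
      rw [hODE' x hx]; ring
    intro ρ hρ
    have h := lapse_constOnIci key hρ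
    rw [h]
    simp only [mul_zero, Real.exp_zero, mul_one]
    rw [hb2, hcdef]; ring
  -- Step 2
  have step2 : ∀ ρ : ℝ, 0 ≤ ρ →
      (iteratedDeriv 2 X ρ - k^2 * X ρ) * Real.exp (-k*ρ)
        + c * Real.exp (-(2*k)*ρ) / (2*k) = c / (2*k) := by
    have key : ∀ x : ℝ, 0 ≤ x → HasDerivAt (fun ρ =>
        (iteratedDeriv 2 X ρ - k^2 * X ρ) * Real.exp (-k*ρ)
          + c * Real.exp (-(2*k)*ρ) / (2*k)) 0 x := by
      intro x hx
      have hs := step1 x hx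
      have hD3 : iteratedDeriv 3 X x
          = c * (Real.exp (k*x))⁻¹ + k^2 * deriv X x
            + k * (iteratedDeriv 2 X x - k^2 * X x) := by
        linear_combination (norm := (field_simp; ring)) (Real.exp (k*x))⁻¹ * hs
      have hY : HasDerivAt (fun ρ => iteratedDeriv 2 X ρ - k^2 * X ρ)
          (iteratedDeriv 3 X x - k^2 * deriv X x) x :=
        (hd 2 x).sub ((hdX x).const_mul (k^2))
      have h := (hY.mul (lapse_hexp (-k) x)).add
        (((lapse_hexp (-(2*k)) x).const_mul c).div_const (2*k))
      refine h.congr_deriv ?_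
      symm
      rw [hD3, em x, eM x]
      field_simp
      ring
    intro ρ hρ
    have h := lapse_constOnIci key hρ
    rw [h]
    simp only [mul_zero, Real.exp_zero, mul_one]
    rw [hb2]; ring
  -- Step 3
  have step3 : ∀ ρ : ℝ, 0 ≤ ρ →
      (deriv X ρ - k * X ρ) * Real.exp (k*ρ)
        - c/(2*k) * (Real.exp (2*k*ρ)/(2*k) - ρ) = b - c/(4*k^2) := by
    have key : ∀ x : ℝ, 0 ≤ x → HasDerivAt (fun ρ =>
        (deriv X ρ - k * X ρ) * Real.exp (k*ρ)
          - c/(2*k) * (Real.exp (2*k*ρ)/(2*k) - ρ)) 0 x := by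
      intro x hx
      have hs := step2 x hx
      rw [em x, eM x] at hs
      have hD2 : iteratedDeriv 2 X x
          = k^2 * X x + (c/(2*k)) * (Real.exp (k*x) - (Real.exp (k*x))⁻¹) := by
        linear_combination (norm := (field_simp; ring)) Real.exp (k*x) * hs
      have hw : HasDerivAt (fun ρ => deriv X ρ - k * X ρ)
          (iteratedDeriv 2 X x - k * deriv X x) x :=
        (hd1 x).sub ((hdX x).const_mul k)
      have h := (hw.mul (lapse_hexp k x)).sub
        ((((lapse_hexp (2*k) x).div_const (2*k)).sub (hasDerivAt_id x)).const_mul (c/(2*k)))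
      refine h.congr_deriv ?_
      symm
      rw [hD2, e2 x]
      field_simp
      ring
    intro ρ hρ
    have h := lapse_constOnIci key hρ
    rw [h]
    simp only [mul_zero, Real.exp_zero, mul_one]
    rw [hb1, hbdef]; ring
  -- Step 4
  have step4 : ∀ ρ : ℝ, 0 ≤ ρ →
      X ρ * Real.exp (-k*ρ)
        = -(b - c/(4*k^2)) * Real.exp (-(2*k)*ρ)/(2*k) + c/(4*k^2)*ρ
          + c/(2*k) * (ρ * Real.exp (-(2*k)*ρ)/(2*k) + Real.exp (-(2*k)*ρ)/(4*k^2))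
          - (-b/(2*k) + c/(4*k^3)) := by
    have key : ∀ x : ℝ, 0 ≤ x → HasDerivAt (fun ρ =>
        X ρ * Real.exp (-k*ρ)
          - (-(b - c/(4*k^2)) * Real.exp (-(2*k)*ρ)/(2*k) + c/(4*k^2)*ρ
            + c/(2*k) * (ρ * Real.exp (-(2*k)*ρ)/(2*k) + Real.exp (-(2*k)*ρ)/(4*k^2)))) 0 x := by
      intro x hx
      have hs := step3 x hx
      rw [e2 x] at hs
      have hdXval : deriv X x
          = k * X x + (b - c/(4*k^2)
            + c/(2*k) * (Real.exp (k*x)^2/(2*k) - x)) * (Real.exp (k*x))⁻¹ := by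
        linear_combination (norm := (field_simp; ring)) (Real.exp (k*x))⁻¹ * hs
      have hB : HasDerivAt (fun ρ : ℝ =>
          -(b - c/(4*k^2)) * Real.exp (-(2*k)*ρ)/(2*k) + c/(4*k^2)*ρ
            + c/(2*k) * (ρ * Real.exp (-(2*k)*ρ)/(2*k) + Real.exp (-(2*k)*ρ)/(4*k^2)))
          (-(b - c/(4*k^2)) * (-(2*k) * Real.exp (-(2*k)*x))/(2*k) + c/(4*k^2)*1
            + c/(2*k) * ((1 * Real.exp (-(2*k)*x) + x * (-(2*k) * Real.exp (-(2*k)*x)))/(2*k)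
              + (-(2*k) * Real.exp (-(2*k)*x))/(4*k^2))) x :=
        ((((lapse_hexp (-(2*k)) x).const_mul (-(b - c/(4*k^2)))).div_const (2*k)).add
          ((hasDerivAt_id x).const_mul (c/(4*k^2)))).add
          (((((hasDerivAt_id x).mul (lapse_hexp (-(2*k)) x)).div_const (2*k)).add
            ((lapse_hexp (-(2*k)) x).div_const (4*k^2))).const_mul (c/(2*k)))
      have h := ((hdX x).mul (lapse_hexp (-k) x)).sub hB
      refine h.congr_deriv ?_
      symm
      rw [hdXval, em x, eM x]
      field_simp
      ring
    intro ρ hρ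
    have h := lapse_constOnIci key hρ
    simp only [mul_zero, Real.exp_zero, mul_one, hb1, zero_mul] at h
    linear_combination h
  -- limits
  have l1 : Tendsto (fun ρ : ℝ => Real.exp (-(2*k)*ρ)) atTop (nhds 0) := by
    have h1 : Tendsto (fun ρ : ℝ => -(2*k)*ρ) atTop atBot :=
      (tendsto_const_mul_atBot_of_neg (by linarith)).2 tendsto_id
    exact Real.tendsto_exp_atBot.comp h1
  have l1k : Tendsto (fun ρ : ℝ => Real.exp (-k*ρ)) atTop (nhds 0) := by
    have h1 : Tendsto (fun ρ : ℝ => -k*ρ) atTop atBot :=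
      (tendsto_const_mul_atBot_of_neg (by linarith)).2 tendsto_id
    exact Real.tendsto_exp_atBot.comp h1
  have l2 : Tendsto (fun ρ : ℝ => ρ * Real.exp (-(2*k)*ρ)) atTop (nhds 0) := by
    have h0 : Tendsto (fun y : ℝ => y * Real.exp (-y)) atTop (nhds 0) := by
      simpa using Real.tendsto_pow_mul_exp_neg_atTop_nhds_zero 1
    have h1 : Tendsto (fun ρ : ℝ => (2*k)*ρ) atTop atTop :=
      Tendsto.const_mul_atTop (by linarith) tendsto_id
    have h3 := (h0.comp h1).const_mul (1/(2*k))
    have h4 : (fun ρ : ℝ => 1/(2*k) * ((2*k*ρ) * Real.exp (-(2*k*ρ))))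
        = fun ρ : ℝ => ρ * Real.exp (-(2*k)*ρ) := by
      funext ρ
      rw [show -(2*k*ρ) = -(2*k)*ρ by ring]
      field_simp
    rw [Function.comp_def] at h3
    rw [h4] at h3
    simpa using h3
  have hXe : Tendsto (fun ρ : ℝ => X ρ * Real.exp (-k*ρ)) atTop (nhds 0) := by
    simpa using hdecay.mul l1k
  have key : ∀ ρ : ℝ, 0 ≤ ρ → c/(4*k^2)*ρ
      = X ρ * Real.exp (-k*ρ) + (b - c/(4*k^2)) * Real.exp (-(2*k)*ρ)/(2*k)
        - c/(2*k) * (ρ * Real.exp (-(2*k)*ρ)/(2*k) + Real.exp (-(2*k)*ρ)/(4*k^2))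
        + (-b/(2*k) + c/(4*k^3)) := by
    intro ρ hρ
    linear_combination -(step4 ρ hρ)
  have h2 : Tendsto (fun ρ : ℝ => (b - c/(4*k^2)) * Real.exp (-(2*k)*ρ)/(2*k)) atTop (nhds 0) := by
    simpa using (l1.const_mul (b - c/(4*k^2))).div_const (2*k)
  have h3 : Tendsto (fun ρ : ℝ =>
      c/(2*k) * (ρ * Real.exp (-(2*k)*ρ)/(2*k) + Real.exp (-(2*k)*ρ)/(4*k^2))) atTop (nhds 0) := by
    simpa using ((l2.div_const (2*k)).add (l1.div_const (4*k^2))).const_mul (c/(2*k))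
  have hR : Tendsto (fun ρ : ℝ =>
      X ρ * Real.exp (-k*ρ) + (b - c/(4*k^2)) * Real.exp (-(2*k)*ρ)/(2*k)
        - c/(2*k) * (ρ * Real.exp (-(2*k)*ρ)/(2*k) + Real.exp (-(2*k)*ρ)/(4*k^2))
        + (-b/(2*k) + c/(4*k^3))) atTop (nhds (-b/(2*k) + c/(4*k^3))) := by
    simpa using ((hXe.add h2).sub h3).add
      (tendsto_const_nhds (α := ℝ) (x := -b/(2*k) + c/(4*k^3)) (f := atTop))
  have hlin : Tendsto (fun ρ : ℝ => c/(4*k^2)*ρ) atTop (nhds (-b/(2*k) + c/(4*k^3))) := by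
    refine hR.congr' ?_
    filter_upwards [eventually_ge_atTop (0:ℝ)] with ρ hρ using (key ρ hρ).symm
  have hc0 : c = 0 := by
    have hshift : Tendsto (fun ρ : ℝ => c/(4*k^2)*(ρ+1)) atTop (nhds (-b/(2*k) + c/(4*k^3))) := by
      have := hlin.comp (tendsto_atTop_add_const_right atTop 1 tendsto_id)
      simpa [Function.comp_def] using this
    have hconst : Tendsto (fun _ : ℝ => c/(4*k^2)) atTop
        (nhds ((-b/(2*k) + c/(4*k^3)) - (-b/(2*k) + c/(4*k^3)))) := by
      refine (hshift.sub hlin).congr fun ρ => by ring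
    have h := tendsto_nhds_unique tendsto_const_nhds hconst
    rw [sub_self] at h
    field_simp at h
    simpa using h
  simp only [hc0] at key
  have hfin : Tendsto (fun ρ : ℝ => b/(2*k) - b * Real.exp (-(2*k)*ρ)/(2*k)) atTop
      (nhds (b/(2*k))) := by
    simpa using (tendsto_const_nhds (α := ℝ) (x := b/(2*k)) (f := atTop)).sub
      ((l1.const_mul b).div_const (2*k))
  have hb0 : b = 0 := by
    have heq : (fun ρ : ℝ => b/(2*k) - b * Real.exp (-(2*k)*ρ)/(2*k))
        =ᶠ[atTop] (fun ρ : ℝ => X ρ * Real.exp (-k*ρ)) := by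
      filter_upwards [eventually_ge_atTop (0:ℝ)] with ρ hρ
      linear_combination key ρ hρ
    have h := tendsto_nhds_unique (hfin.congr' heq) hXe
    field_simp at h
    simpa using h
  intro ρ hρ
  have h := key ρ hρ
  rw [hb0] at h
  have hz : X ρ * Real.exp (-k*ρ) = 0 := by linear_combination -h
  rcases mul_eq_zero.mp hz with h' | h'
  · exact h'
  · exact absurd h' (Real.exp_ne_zero _)
end

section
/- Let ξ = (ξ₁, ξ₂) ∈ ℝ² be nonzero and set k = √(ξ₁² + ξ₂²). For any constants a, a₁, a₂, b₁, b₂, c ∈ ℂ, the functions X(ρ) = a·exp(−kρ) + (i/k)(b₁ξ₁ + b₂ξ₂)·ρ·exp(−kρ) + c·((3/10)kρ² + ρ)·exp(−kρ) and X_A(ρ) = a_A·exp(−kρ) + b_A·ρ·exp(−kρ) − (3/10)·i·c·ξ_A·ρ²·exp(−kρ) for A = 1, 2, satisfy the shift Lopatinskij–Shapiro ODE system E₀''(ρ) − k²E₀(ρ) = 0 and E_A''(ρ) − k²E_A(ρ) = 0 (A = 1, 2) for all ρ ∈ ℝ. -/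
/-! Every component of the family is a quadratic polynomial times `e^{−kρ}`, a class closed under
differentiation. Substituting, the `ρ` and `ρ²` terms of `E₀` and `E_A` cancel once `i² = −1` and
`k² = ξ₁² + ξ₂²` are used, so each `E` is a constant multiple of `e^{−kρ}`, which solves
`f'' = k² f`. -/

open Complex

/-- The quantity `E₀ = 4X'' − k²X + 3i(ξ₁X₁' + ξ₂X₂')` from the principal part of the
shift component of the approximate Killing vector equation. -/
noncomputable def shiftE0 (k ξ₁ ξ₂ : ℝ) (X X₁ X₂ : ℝ → ℂ) : ℝ → ℂ :=
  fun ρ => 4 * deriv (deriv X) ρ - (k : ℂ) ^ 2 * X ρ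
    + 3 * Complex.I * ((ξ₁ : ℂ) * deriv X₁ ρ + (ξ₂ : ℂ) * deriv X₂ ρ)

/-- The quantity `E_A = X_A'' − k²X_A + 3iξ_A(X' + i(ξ₁X₁ + ξ₂X₂))` for `A = 1, 2`. -/
noncomputable def shiftEA (k ξA ξ₁ ξ₂ : ℝ) (X XA X₁ X₂ : ℝ → ℂ) : ℝ → ℂ :=
  fun ρ => deriv (deriv XA) ρ - (k : ℂ) ^ 2 * XA ρ
    + 3 * Complex.I * (ξA : ℂ) * (deriv X ρ + Complex.I * ((ξ₁ : ℂ) * X₁ ρ + (ξ₂ : ℂ) * X₂ ρ))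

/-- The shift Lopatinskij–Shapiro ODE system: `E₀'' − k²E₀ = 0` and `E_A'' − k²E_A = 0`
for `A = 1, 2`, at the point `ρ`. -/
def shiftLS (k ξ₁ ξ₂ : ℝ) (X X₁ X₂ : ℝ → ℂ) (ρ : ℝ) : Prop :=
  deriv (deriv (shiftE0 k ξ₁ ξ₂ X X₁ X₂)) ρ
      - (k : ℂ) ^ 2 * shiftE0 k ξ₁ ξ₂ X X₁ X₂ ρ = 0 ∧
  deriv (deriv (shiftEA k ξ₁ ξ₁ ξ₂ X X₁ X₁ X₂)) ρ
      - (k : ℂ) ^ 2 * shiftEA k ξ₁ ξ₁ ξ₂ X X₁ X₁ X₂ ρ = 0 ∧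
  deriv (deriv (shiftEA k ξ₂ ξ₁ ξ₂ X X₂ X₁ X₂)) ρ
      - (k : ℂ) ^ 2 * shiftEA k ξ₂ ξ₁ ξ₂ X X₂ X₁ X₂ ρ = 0

/-- The lapse component `X(ρ) = a·e^{−kρ} + (i/k)(b₁ξ₁ + b₂ξ₂)·ρ·e^{−kρ}
   + c·((3/10)kρ² + ρ)·e^{−kρ}` of the stable solution family. -/
noncomputable def shiftXstable (k ξ₁ ξ₂ : ℝ) (a b₁ b₂ c : ℂ) : ℝ → ℂ :=
  fun ρ => a * Complex.exp (-(k : ℂ) * ρ)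
    + (Complex.I / (k : ℂ)) * (b₁ * (ξ₁ : ℂ) + b₂ * (ξ₂ : ℂ)) * (ρ : ℂ) * Complex.exp (-(k : ℂ) * ρ)
    + c * ((3 / 10) * (k : ℂ) * (ρ : ℂ) ^ 2 + (ρ : ℂ)) * Complex.exp (-(k : ℂ) * ρ)

/-- The components `X_A(ρ) = a_A·e^{−kρ} + b_A·ρ·e^{−kρ} − (3/10)i·c·ξ_A·ρ²·e^{−kρ}`
of the stable solution family, `A = 1, 2`. -/
noncomputable def shiftXAstable (k ξA : ℝ) (aA bA c : ℂ) : ℝ → ℂ :=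
  fun ρ => aA * Complex.exp (-(k : ℂ) * ρ) + bA * (ρ : ℂ) * Complex.exp (-(k : ℂ) * ρ)
    - (3 / 10) * Complex.I * c * (ξA : ℂ) * (ρ : ℂ) ^ 2 * Complex.exp (-(k : ℂ) * ρ)

noncomputable def quadExp (c₀ c₁ c₂ μ : ℂ) : ℝ → ℂ :=
  fun ρ => (c₀ + c₁ * ρ + c₂ * (ρ : ℂ) ^ 2) * exp (μ * ρ)

theorem hasDerivAt_quadExp (c₀ c₁ c₂ μ : ℂ) (ρ : ℝ) :
    HasDerivAt (quadExp c₀ c₁ c₂ μ) (quadExp (c₁ + μ * c₀) (2 * c₂ + μ * c₁) (μ * c₂) μ ρ) ρ := by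
  have hpoly : HasDerivAt (fun z : ℂ => c₀ + c₁ * z + c₂ * z ^ 2) (c₁ + c₂ * (2 * ρ)) ρ := by
    simpa [Pi.add_def] using (((hasDerivAt_id (ρ : ℂ)).const_mul c₁).const_add c₀).add
      ((hasDerivAt_pow 2 (ρ : ℂ)).const_mul c₂)
  have hexp : HasDerivAt (fun z : ℂ => exp (μ * z)) (exp (μ * ρ) * μ) ρ := by
    simpa using ((hasDerivAt_id (ρ : ℂ)).const_mul μ).cexp
  exact ((hpoly.mul hexp).comp_ofReal).congr_deriv (by simp only [quadExp]; ring)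

theorem deriv_quadExp (c₀ c₁ c₂ μ : ℂ) :
    deriv (quadExp c₀ c₁ c₂ μ) = quadExp (c₁ + μ * c₀) (2 * c₂ + μ * c₁) (μ * c₂) μ :=
  funext fun ρ => (hasDerivAt_quadExp c₀ c₁ c₂ μ ρ).deriv

theorem deriv_deriv_quadExp_const (e μ : ℂ) :
    deriv (deriv (quadExp e 0 0 μ)) = fun ρ => μ ^ 2 * quadExp e 0 0 μ ρ := by
  funext ρ
  simp only [deriv_quadExp, quadExp]
  ring

theorem shiftXstable_eq_quadExp (k ξ₁ ξ₂ : ℝ) (a b₁ b₂ c : ℂ) :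
    shiftXstable k ξ₁ ξ₂ a b₁ b₂ c =
      quadExp a (I / k * (b₁ * ξ₁ + b₂ * ξ₂) + c) (3 / 10 * k * c) (-k) := by
  funext ρ
  simp only [shiftXstable, quadExp]
  ring

theorem shiftXAstable_eq_quadExp (k ξA : ℝ) (aA bA c : ℂ) :
    shiftXAstable k ξA aA bA c = quadExp aA bA (-(3 / 10 * I * c * ξA)) (-k) := by
  funext ρ
  simp only [shiftXAstable, quadExp]
  ring

theorem shiftE0_stable_eq_quadExp {k ξ₁ ξ₂ : ℝ} (hk : k ≠ 0) (hξ : k ^ 2 = ξ₁ ^ 2 + ξ₂ ^ 2)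
    (a a₁ a₂ b₁ b₂ c : ℂ) :
    shiftE0 k ξ₁ ξ₂ (shiftXstable k ξ₁ ξ₂ a b₁ b₂ c)
        (shiftXAstable k ξ₁ a₁ b₁ c) (shiftXAstable k ξ₂ a₂ b₂ c) =
      quadExp (3 * k ^ 2 * a - 28 / 5 * k * c - 5 * I * (b₁ * ξ₁ + b₂ * ξ₂)
        - 3 * I * k * (a₁ * ξ₁ + a₂ * ξ₂)) 0 0 (-k) := by
  have hξ' : (k : ℂ) ^ 2 = (ξ₁ : ℂ) ^ 2 + (ξ₂ : ℂ) ^ 2 := by exact_mod_cast hξ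
  have hk' : (k : ℂ) ≠ 0 := by exact_mod_cast hk
  funext ρ
  simp only [shiftE0, shiftXstable_eq_quadExp, shiftXAstable_eq_quadExp, deriv_quadExp, quadExp]
  field_simp
  linear_combination 45 * c * ρ * (k * ρ - 2) * (hξ' + (ξ₁ ^ 2 + ξ₂ ^ 2) * I_sq)

theorem shiftEA_stable_eq_quadExp {k ξ₁ ξ₂ : ℝ} (hk : k ≠ 0) (hξ : k ^ 2 = ξ₁ ^ 2 + ξ₂ ^ 2)
    (ξA : ℝ) (a aA a₁ a₂ bA b₁ b₂ c : ℂ) :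
    shiftEA k ξA ξ₁ ξ₂ (shiftXstable k ξ₁ ξ₂ a b₁ b₂ c) (shiftXAstable k ξA aA bA c)
        (shiftXAstable k ξ₁ a₁ b₁ c) (shiftXAstable k ξ₂ a₂ b₂ c) =
      quadExp (-(3 / 5) * I * c * ξA - 2 * k * bA
        + 3 * I * ξA * (I / k * (b₁ * ξ₁ + b₂ * ξ₂) + c - k * a + I * (a₁ * ξ₁ + a₂ * ξ₂)))
        0 0 (-k) := by
  have hξ' : (k : ℂ) ^ 2 = (ξ₁ : ℂ) ^ 2 + (ξ₂ : ℂ) ^ 2 := by exact_mod_cast hξ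
  have hk' : (k : ℂ) ≠ 0 := by exact_mod_cast hk
  funext ρ
  simp only [shiftEA, shiftXstable_eq_quadExp, shiftXAstable_eq_quadExp, deriv_quadExp, quadExp]
  field_simp
  linear_combination -45 * I * ξA * c * k * ρ ^ 2 * (hξ' + (ξ₁ ^ 2 + ξ₂ ^ 2) * I_sq)

/-- the stable family solves the shift Lopatinskij–Shapiro ODE system. -/
theorem shift_LS_stable_family_solves (ξ₁ ξ₂ : ℝ) (hξ : ξ₁ ≠ 0 ∨ ξ₂ ≠ 0)
    (k : ℝ) (hk : k = Real.sqrt (ξ₁ ^ 2 + ξ₂ ^ 2))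
    (a a₁ a₂ b₁ b₂ c : ℂ) :
    ∀ ρ : ℝ, shiftLS k ξ₁ ξ₂
      (shiftXstable k ξ₁ ξ₂ a b₁ b₂ c)
      (shiftXAstable k ξ₁ a₁ b₁ c)
      (shiftXAstable k ξ₂ a₂ b₂ c) ρ := by
  intro ρ
  have hpos : 0 < ξ₁ ^ 2 + ξ₂ ^ 2 := by rcases hξ with h | h <;> positivity
  have hk0 : k ≠ 0 := hk ▸ (Real.sqrt_pos.mpr hpos).ne'
  have hk2 : k ^ 2 = ξ₁ ^ 2 + ξ₂ ^ 2 := hk ▸ Real.sq_sqrt hpos.le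
  refine ⟨?_, ?_, ?_⟩ <;>
    simp only [shiftE0_stable_eq_quadExp hk0 hk2, shiftEA_stable_eq_quadExp hk0 hk2,
      deriv_deriv_quadExp_const, neg_sq, sub_self]
end

section
/- Let ξ = (ξ₁, ξ₂) ∈ ℝ² be nonzero, set k = √(ξ₁² + ξ₂²), and let a, a₁, a₂, b₁, b₂, c ∈ ℂ. Define X(ρ) = a·exp(−kρ) + (i/k)(b₁ξ₁ + b₂ξ₂)·ρ·exp(−kρ) + c·((3/10)kρ² + ρ)·exp(−kρ) and X_A(ρ) = a_A·exp(−kρ) + b_A·ρ·exp(−kρ) − (3/10)·i·c·ξ_A·ρ²·exp(−kρ) for A = 1, 2. If X(0) = 0, X₁(0) = 0, X₂(0) = 0, X'(0) = 0, X₁'(0) = 0 and X₂'(0) = 0, then a = a₁ = a₂ = b₁ = b₂ = c = 0, and hence X, X₁, X₂ are identically zero. -/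
open Complex

/-! Each component of the stable family is `(p + qρ + rρ²)·e^{−kρ}`, whose value and derivative
at `ρ = 0` are `p` and `q − kp`. The six boundary conditions are therefore triangular: the values
give `a = a₁ = a₂ = 0`, then `X_A'(0) = b_A` gives `b_A = 0`, and finally `X'(0) = c`. -/

theorem hasDerivAt_quadratic_mul_cexp (p q r k : ℂ) (x : ℝ) :
    HasDerivAt (fun ρ : ℝ => (p + q * ρ + r * (ρ : ℂ) ^ 2) * exp (k * ρ))
      ((q + 2 * r * x + k * (p + q * x + r * (x : ℂ) ^ 2)) * exp (k * x)) x := by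
  have hρ : HasDerivAt (fun ρ : ℝ => (ρ : ℂ)) 1 x := (hasDerivAt_id x).ofReal_comp
  have hpoly := ((hρ.const_mul q).const_add p).fun_add ((hρ.fun_pow 2).const_mul r)
  refine (hpoly.fun_mul (hρ.const_mul k).cexp).congr_deriv ?_
  push_cast
  ring

theorem deriv_quadratic_mul_cexp_zero (p q r k : ℂ) :
    deriv (fun ρ : ℝ => (p + q * ρ + r * (ρ : ℂ) ^ 2) * exp (k * ρ)) 0 = q + k * p := by
  simpa using (hasDerivAt_quadratic_mul_cexp p q r k 0).deriv

theorem shiftXstable_eq (k ξ₁ ξ₂ : ℝ) (a b₁ b₂ c : ℂ) :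
    shiftXstable k ξ₁ ξ₂ a b₁ b₂ c = fun ρ : ℝ =>
      (a + (I / k * (b₁ * ξ₁ + b₂ * ξ₂) + c) * ρ + 3 / 10 * k * c * (ρ : ℂ) ^ 2)
        * exp (-k * ρ) := by
  funext ρ; simp only [shiftXstable]; ring

theorem shiftXAstable_eq (k ξA : ℝ) (aA bA c : ℂ) :
    shiftXAstable k ξA aA bA c = fun ρ : ℝ =>
      (aA + bA * ρ + -(3 / 10) * I * c * ξA * (ρ : ℂ) ^ 2) * exp (-k * ρ) := by
  funext ρ; simp only [shiftXAstable]; ring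

theorem shiftXstable_zero (k ξ₁ ξ₂ : ℝ) (a b₁ b₂ c : ℂ) :
    shiftXstable k ξ₁ ξ₂ a b₁ b₂ c 0 = a := by
  simp [shiftXstable]

theorem shiftXAstable_zero (k ξA : ℝ) (aA bA c : ℂ) : shiftXAstable k ξA aA bA c 0 = aA := by
  simp [shiftXAstable]

theorem deriv_shiftXstable_zero (k ξ₁ ξ₂ : ℝ) (a b₁ b₂ c : ℂ) :
    deriv (shiftXstable k ξ₁ ξ₂ a b₁ b₂ c) 0 = I / k * (b₁ * ξ₁ + b₂ * ξ₂) + c - k * a := by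
  rw [shiftXstable_eq, deriv_quadratic_mul_cexp_zero]; ring

theorem deriv_shiftXAstable_zero (k ξA : ℝ) (aA bA c : ℂ) :
    deriv (shiftXAstable k ξA aA bA c) 0 = bA - k * aA := by
  rw [shiftXAstable_eq, deriv_quadratic_mul_cexp_zero]; ring

theorem shiftXstable_const_zero (k ξ₁ ξ₂ : ℝ) : shiftXstable k ξ₁ ξ₂ 0 0 0 0 = 0 := by
  funext ρ; simp [shiftXstable]

theorem shiftXAstable_const_zero (k ξA : ℝ) : shiftXAstable k ξA 0 0 0 = 0 := by
  funext ρ; simp [shiftXAstable]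

theorem shift_LS_stable_family_boundary_conditions_general (ξ₁ ξ₂ : ℝ) (k : ℝ)
    (a a₁ a₂ b₁ b₂ c : ℂ)
    (hX0 : shiftXstable k ξ₁ ξ₂ a b₁ b₂ c 0 = 0)
    (hX10 : shiftXAstable k ξ₁ a₁ b₁ c 0 = 0)
    (hX20 : shiftXAstable k ξ₂ a₂ b₂ c 0 = 0)
    (hX0' : deriv (shiftXstable k ξ₁ ξ₂ a b₁ b₂ c) 0 = 0)
    (hX10' : deriv (shiftXAstable k ξ₁ a₁ b₁ c) 0 = 0)
    (hX20' : deriv (shiftXAstable k ξ₂ a₂ b₂ c) 0 = 0) :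
    a = 0 ∧ a₁ = 0 ∧ a₂ = 0 ∧ b₁ = 0 ∧ b₂ = 0 ∧ c = 0 ∧
    (∀ ρ : ℝ, shiftXstable k ξ₁ ξ₂ a b₁ b₂ c ρ = 0 ∧
      shiftXAstable k ξ₁ a₁ b₁ c ρ = 0 ∧ shiftXAstable k ξ₂ a₂ b₂ c ρ = 0) := by
  rw [shiftXstable_zero] at hX0
  rw [shiftXAstable_zero] at hX10 hX20
  subst hX0 hX10 hX20
  have hb₁ : b₁ = 0 := by simpa [deriv_shiftXAstable_zero] using hX10'
  have hb₂ : b₂ = 0 := by simpa [deriv_shiftXAstable_zero] using hX20'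
  subst hb₁ hb₂
  have hc : c = 0 := by simpa [deriv_shiftXstable_zero] using hX0'
  subst hc
  simp [shiftXstable_const_zero, shiftXAstable_const_zero]

/-- if the stable family satisfies the vanishing boundary conditions at `ρ = 0`
(values and first derivatives), then all six constants vanish and the functions are
identically zero. -/
theorem shift_LS_stable_family_boundary_conditions (ξ₁ ξ₂ : ℝ) (hξ : ξ₁ ≠ 0 ∨ ξ₂ ≠ 0)
    (k : ℝ) (hk : k = Real.sqrt (ξ₁ ^ 2 + ξ₂ ^ 2))
    (a a₁ a₂ b₁ b₂ c : ℂ)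
    (hX0 : shiftXstable k ξ₁ ξ₂ a b₁ b₂ c 0 = 0)
    (hX10 : shiftXAstable k ξ₁ a₁ b₁ c 0 = 0)
    (hX20 : shiftXAstable k ξ₂ a₂ b₂ c 0 = 0)
    (hX0' : deriv (shiftXstable k ξ₁ ξ₂ a b₁ b₂ c) 0 = 0)
    (hX10' : deriv (shiftXAstable k ξ₁ a₁ b₁ c) 0 = 0)
    (hX20' : deriv (shiftXAstable k ξ₂ a₂ b₂ c) 0 = 0) :
    a = 0 ∧ a₁ = 0 ∧ a₂ = 0 ∧ b₁ = 0 ∧ b₂ = 0 ∧ c = 0 ∧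
    (∀ ρ : ℝ, shiftXstable k ξ₁ ξ₂ a b₁ b₂ c ρ = 0 ∧
      shiftXAstable k ξ₁ a₁ b₁ c ρ = 0 ∧ shiftXAstable k ξ₂ a₂ b₂ c ρ = 0) :=
  shift_LS_stable_family_boundary_conditions_general ξ₁ ξ₂ k a a₁ a₂ b₁ b₂ c hX0 hX10 hX20 hX0'
    hX10' hX20'
end
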